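/- For any conjugate-linear anti-involution θ of the Schrödinger–Virasoro Lie algebra 𝔰𝔳, there exist complex numbers λ, μ with |λ| = |μ| = 1 and λ' ∈ ℂ such that θ(c) = λ·c + λ'·M₀ and θ(M₀) = μ·M₀. -/

import Mathlib

/-- Index type for the distinguished basis of the Schrödinger–Virasoro algebra.
`Y n` stands for the basis element `Y_{n+1/2}`. -/
inductive SVIndex : Type
  | L : ℤ → SVIndex
  | M : ℤ → SVIndex
  | Y : ℤ → SVIndex
  | c : SVIndex

/-- A realization of the Schrödinger–Virasoro Lie algebra: a complex Lie algebra `sv`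
with distinguished elements `L n`, `M n`, `Y n` (representing `Y_{n+1/2}`) and `c`
which form a basis and satisfy the defining bracket relations. -/
structure SVAlgebra (sv : Type*) [LieRing sv] [LieAlgebra ℂ sv] where
  L : ℤ → sv
  M : ℤ → sv
  Y : ℤ → sv
  c : sv
  indep : LinearIndependent ℂ (fun i : SVIndex =>
    match i with
    | .L n => L n
    | .M n => M n
    | .Y n => Y n
    | .c => c)
  span_top : Submodule.span ℂ (Set.range (fun i : SVIndex =>
    match i with
    | .L n => L n
    | .M n => M n
    | .Y n => Y n
    | .c => c)) = ⊤
  bracket_LL : ∀ m n : ℤ, ⁅L m, L n⁆ =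
    ((n : ℂ) - (m : ℂ)) • L (m + n)
      + (if m + n = 0 then ((m : ℂ) ^ 3 - (m : ℂ)) / 12 else 0) • c
  bracket_LM : ∀ m n : ℤ, ⁅L m, M n⁆ = (n : ℂ) • M (m + n)
  bracket_LY : ∀ m n : ℤ, ⁅L m, Y n⁆ = ((n : ℂ) + (1 - (m : ℂ)) / 2) • Y (m + n)
  bracket_YY : ∀ m n : ℤ, ⁅Y m, Y n⁆ = ((n : ℂ) - (m : ℂ)) • M (m + n + 1)
  bracket_MM : ∀ m n : ℤ, ⁅M m, M n⁆ = 0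
  bracket_MY : ∀ m n : ℤ, ⁅M m, Y n⁆ = 0
  bracket_c : ∀ x : sv, ⁅x, c⁆ = 0

/-- A conjugate-linear anti-involution of a complex Lie algebra. -/
structure ConjAntiInvolution (sv : Type*) [LieRing sv] [LieAlgebra ℂ sv] where
  toFun : sv → sv
  map_add' : ∀ x y : sv, toFun (x + y) = toFun x + toFun y
  map_smul' : ∀ (a : ℂ) (x : sv), toFun (a • x) = (starRingEnd ℂ a) • toFun x
  map_bracket' : ∀ x y : sv, toFun ⁅x, y⁆ = ⁅toFun y, toFun x⁆
  invol' : ∀ x : sv, toFun (toFun x) = x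

variable {sv : Type*} [LieRing sv] [LieAlgebra ℂ sv]

/-!
The centre of `𝔰𝔳` is spanned by `c` and `M₀`: `ad L₀` acts on each basis vector by its degree,
which kills every coordinate except those of `L₀`, `M₀` and `c`, and `[L₁, L₀] = -L₁` kills the
`L₀`-coordinate. An anti-involution preserves the centre, and applying `θ` twice forces the
diagonal coefficients to have modulus one as soon as `θ(M₀)` has no `c`-component.
That last fact holds because `M₀ = [Y_{-1/2}, Y_{1/2}]`, so `θ(M₀) = [u, v]` is a central
commutator. Its components along the Witt algebra vanish; in the Witt algebra commuting
elements are proportional (compare leading terms), and the Virasoro cocycle is alternating,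
so it vanishes on the Witt parts of `u` and `v`.
-/

open Finsupp

lemma finsum_eq_zero_of_comp_involutive {α G : Type*} [AddCommGroup G] [IsAddTorsionFree G]
    {σ : α → α} (hσ : Function.Involutive σ) {f : α → G} (hf : ∀ a, f (σ a) = -f a) :
    ∑ᶠ a, f a = 0 := by
  have h := finsum_comp_equiv (hσ.toPerm σ) (f := f)
  simp only [Function.Involutive.coe_toPerm, hf, finsum_neg_distrib] at h
  exact self_eq_neg.mp h.symm

lemma Complex.norm_eq_one_of_conj_mul_self {z : ℂ} (h : starRingEnd ℂ z * z = 1) : ‖z‖ = 1 := by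
  rw [Complex.conj_mul'] at h
  exact (pow_eq_one_iff_of_nonneg (norm_nonneg z) two_ne_zero).mp (by exact_mod_cast h)

section Witt

variable {K : Type*} [Field K]

/-- `wittCoeff k a b` and `virasoroCocycle a b` are the coefficients of `L_k` and of `c` in
`[∑ a_m L_m, ∑ b_n L_n]` in the Virasoro algebra. -/
noncomputable def wittCoeff (k : ℤ) : (ℤ →₀ K) →ₗ[K] (ℤ →₀ K) →ₗ[K] K :=
  linearCombination K fun m => ((k : K) - 2 * m) • lapply (k - m)

noncomputable def virasoroCocycle : (ℤ →₀ K) →ₗ[K] (ℤ →₀ K) →ₗ[K] K :=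
  linearCombination K fun m => (((m : K) ^ 3 - m) / 12) • lapply (-m)

lemma wittCoeff_apply (k : ℤ) (a b : ℤ →₀ K) :
    wittCoeff k a b = ∑ m ∈ a.support, ((k : K) - 2 * m) * a m * b (k - m) := by
  simp [wittCoeff, linearCombination_apply, Finsupp.sum, LinearMap.sum_apply, mul_assoc,
    mul_left_comm]

lemma virasoroCocycle_apply (a b : ℤ →₀ K) :
    virasoroCocycle a b = ∑ m ∈ a.support, ((m : K) ^ 3 - m) / 12 * a m * b (-m) := by
  simp [virasoroCocycle, linearCombination_apply, Finsupp.sum, LinearMap.sum_apply, mul_assoc,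
    mul_left_comm]

lemma wittCoeff_self [CharZero K] (k : ℤ) (a : ℤ →₀ K) : wittCoeff k a a = 0 := by
  rw [wittCoeff_apply, ← finsum_eq_sum_of_support_subset _ fun m hm => ?_]
  · refine finsum_eq_zero_of_comp_involutive (σ := fun m => k - m) (fun m => sub_sub_cancel k m)
      fun m => ?_
    simp only [sub_sub_cancel]
    push_cast
    ring
  · contrapose! hm
    simp [Finsupp.notMem_support_iff.mp hm]

lemma virasoroCocycle_self [CharZero K] (a : ℤ →₀ K) : virasoroCocycle a a = 0 := by
  rw [virasoroCocycle_apply, ← finsum_eq_sum_of_support_subset _ fun m hm => ?_]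
  · refine finsum_eq_zero_of_comp_involutive (σ := fun m : ℤ => -m) neg_neg fun m => ?_
    simp only [neg_neg]
    push_cast
    ring
  · contrapose! hm
    simp [Finsupp.notMem_support_iff.mp hm]

lemma wittCoeff_max'_add_max' (a b : ℤ →₀ K) (ha : a.support.Nonempty) (hb : b.support.Nonempty) :
    wittCoeff (a.support.max' ha + b.support.max' hb) a b =
      ((b.support.max' hb : K) - a.support.max' ha) * a (a.support.max' ha) *
        b (b.support.max' hb) := by
  set N := a.support.max' ha
  set P := b.support.max' hb
  rw [wittCoeff_apply, Finset.sum_eq_single_of_mem N (a.support.max'_mem ha) fun m hm hmN => ?_]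
  · rw [add_sub_cancel_left]
    push_cast
    ring
  · have hmN : m < N := lt_of_le_of_ne (a.support.le_max' m hm) hmN
    have : b (N + P - m) = 0 :=
      Finsupp.notMem_support_iff.mp fun h => by linarith [b.support.le_max' _ h]
    rw [this, mul_zero]

lemma eq_smul_of_wittCoeff_eq_zero [CharZero K] {a b : ℤ →₀ K} (ha : a ≠ 0)
    (h : ∀ k, wittCoeff k a b = 0) : ∃ t : K, b = t • a := by
  have ha' : a.support.Nonempty := Finsupp.support_nonempty_iff.mpr ha
  set N := a.support.max' ha'
  have haN : a N ≠ 0 := Finsupp.mem_support_iff.mp (a.support.max'_mem ha')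
  refine ⟨b N / a N, sub_eq_zero.mp ?_⟩
  set b' := b - (b N / a N) • a
  have hb'N : b' N = 0 := by simp [b', haN]
  have h' : ∀ k, wittCoeff k a b' = 0 := fun k => by simp [b', h, wittCoeff_self]
  by_contra hb'
  have hsupp : b'.support.Nonempty := Finsupp.support_nonempty_iff.mpr hb'
  have hlead : b' (b'.support.max' hsupp) ≠ 0 := Finsupp.mem_support_iff.mp (b'.support.max'_mem hsupp)
  have htop := h' (N + b'.support.max' hsupp)
  rw [wittCoeff_max'_add_max' a b' ha' hsupp] at htop
  have hPN : b'.support.max' hsupp = N := by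
    simp only [mul_eq_zero, sub_eq_zero, Int.cast_inj, hlead, or_false] at htop
    exact htop.resolve_right haN
  exact hlead (hPN ▸ hb'N)

theorem virasoroCocycle_eq_zero_of_wittCoeff_eq_zero [CharZero K] {a b : ℤ →₀ K}
    (h : ∀ k, wittCoeff k a b = 0) : virasoroCocycle a b = 0 := by
  rcases eq_or_ne a 0 with rfl | ha
  · simp
  obtain ⟨t, rfl⟩ := eq_smul_of_wittCoeff_eq_zero ha h
  simp [virasoroCocycle_self]

end Witt

noncomputable def SVIndex.weight : SVIndex → ℂ
  | .L n => n
  | .M n => n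
  | .Y n => n + 1 / 2
  | .c => 0

lemma SVIndex.weight_ne_zero : ∀ i : SVIndex, i ≠ .L 0 → i ≠ .M 0 → i ≠ .c → i.weight ≠ 0
  | .L n, h, _, _ => by simpa [weight] using h
  | .M n, _, h, _ => by simpa [weight] using h
  | .Y n, _, _, _ => fun h => by
      simp only [weight] at h
      have : ((2 * n + 1 : ℤ) : ℂ) = 0 := by push_cast; linear_combination 2 * h
      have : 2 * n + 1 = 0 := by exact_mod_cast this
      omega
  | .c, _, _, h => absurd rfl h

namespace SVAlgebra

variable (A : SVAlgebra sv)

noncomputable def basis : Module.Basis SVIndex ℂ sv :=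
  Module.Basis.mk A.indep A.span_top.ge

@[simp] lemma basis_L (n : ℤ) : A.basis (.L n) = A.L n := Module.Basis.mk_apply ..
@[simp] lemma basis_M (n : ℤ) : A.basis (.M n) = A.M n := Module.Basis.mk_apply ..
@[simp] lemma basis_Y (n : ℤ) : A.basis (.Y n) = A.Y n := Module.Basis.mk_apply ..
@[simp] lemma basis_c : A.basis .c = A.c := Module.Basis.mk_apply ..

@[simp] lemma repr_L (n : ℤ) : A.basis.repr (A.L n) = single (.L n) 1 := by
  rw [← basis_L, Module.Basis.repr_self]
@[simp] lemma repr_M (n : ℤ) : A.basis.repr (A.M n) = single (.M n) 1 := by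
  rw [← basis_M, Module.Basis.repr_self]
@[simp] lemma repr_Y (n : ℤ) : A.basis.repr (A.Y n) = single (.Y n) 1 := by
  rw [← basis_Y, Module.Basis.repr_self]
@[simp] lemma repr_c : A.basis.repr A.c = single .c 1 := by
  rw [← basis_c, Module.Basis.repr_self]

lemma bracket_ML (m n : ℤ) : ⁅A.M m, A.L n⁆ = -((m : ℂ) • A.M (n + m)) := by
  rw [← lie_skew, A.bracket_LM]
lemma bracket_YL (m n : ℤ) :
    ⁅A.Y m, A.L n⁆ = -(((m : ℂ) + (1 - (n : ℂ)) / 2) • A.Y (n + m)) := by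
  rw [← lie_skew, A.bracket_LY]
lemma bracket_YM (m n : ℤ) : ⁅A.Y m, A.M n⁆ = 0 := by
  rw [← lie_skew, A.bracket_MY, neg_zero]
lemma bracket_c_left (x : sv) : ⁅A.c, x⁆ = 0 := by
  rw [← lie_skew, A.bracket_c, neg_zero]

/-- The coordinates along the `L_n`, i.e. the image in the Witt quotient `𝔰𝔳 / ⟨M, Y, c⟩`. -/
noncomputable def wittPart : sv →ₗ[ℂ] ℤ →₀ ℂ :=
  lcomapDomain SVIndex.L (fun _ _ => SVIndex.L.inj) ∘ₗ A.basis.repr.toLinearMap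

lemma wittPart_apply (x : sv) (n : ℤ) : A.wittPart x n = A.basis.repr x (.L n) := rfl

@[simp] lemma wittPart_L (n : ℤ) : A.wittPart (A.L n) = single n 1 := by
  ext k; simp [wittPart_apply, single_apply_left fun _ _ => SVIndex.L.inj]
@[simp] lemma wittPart_M (n : ℤ) : A.wittPart (A.M n) = 0 := by
  ext k; simp [wittPart_apply]
@[simp] lemma wittPart_Y (n : ℤ) : A.wittPart (A.Y n) = 0 := by
  ext k; simp [wittPart_apply]
@[simp] lemma wittPart_c : A.wittPart A.c = 0 := by
  ext k; simp [wittPart_apply]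

lemma repr_bracket_L (k : ℤ) (x y : sv) :
    A.basis.repr ⁅x, y⁆ (.L k) = wittCoeff k (A.wittPart x) (A.wittPart y) := by
  have key : (LieAlgebra.ad ℂ sv : sv →ₗ[ℂ] Module.End ℂ sv).compr₂ (A.basis.coord (.L k)) =
      (wittCoeff k).compl₁₂ A.wittPart A.wittPart := by
    classical
    refine LinearMap.ext_basis A.basis A.basis fun i j => ?_
    rcases i with m | m | m | _ <;> rcases j with n | n | n | _ <;>
      simp [A.bracket_LL, A.bracket_LM, A.bracket_LY, A.bracket_YY, A.bracket_MM, A.bracket_MY,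
        A.bracket_c, A.bracket_ML, A.bracket_YL, A.bracket_YM, A.bracket_c_left, wittCoeff_apply,
        single_apply]
    case L.L =>
      split_ifs <;> simp <;> first | omega | (subst_vars; push_cast; ring)
  simpa using LinearMap.congr_fun₂ key x y

lemma repr_bracket_c (x y : sv) :
    A.basis.repr ⁅x, y⁆ .c = virasoroCocycle (A.wittPart x) (A.wittPart y) := by
  have key : (LieAlgebra.ad ℂ sv : sv →ₗ[ℂ] Module.End ℂ sv).compr₂ (A.basis.coord .c) =
      virasoroCocycle.compl₁₂ A.wittPart A.wittPart := by
    refine LinearMap.ext_basis A.basis A.basis fun i j => ?_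
    rcases i with m | m | m | _ <;> rcases j with n | n | n | _ <;>
      simp [A.bracket_LL, A.bracket_LM, A.bracket_LY, A.bracket_YY, A.bracket_MM, A.bracket_MY,
        A.bracket_c, A.bracket_ML, A.bracket_YL, A.bracket_YM, A.bracket_c_left,
        virasoroCocycle_apply, single_apply]
    case L.L =>
      split_ifs <;> simp <;> omega
  simpa using LinearMap.congr_fun₂ key x y

lemma M_zero_central (x : sv) : ⁅x, A.M 0⁆ = 0 := by
  have key : (LieAlgebra.ad ℂ sv : sv →ₗ[ℂ] Module.End ℂ sv).flip (A.M 0) = 0 :=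
    A.basis.ext fun j => by
      rcases j with n | n | n | _ <;>
        simp [A.bracket_LM, A.bracket_MM, A.bracket_YM, A.bracket_c_left]
  simpa using LinearMap.congr_fun key x

lemma lie_L_zero_basis (j : SVIndex) : ⁅A.L 0, A.basis j⁆ = j.weight • A.basis j := by
  rcases j with n | n | n | _ <;>
    simp [A.bracket_LL, A.bracket_LM, A.bracket_LY, A.bracket_c, SVIndex.weight]

lemma repr_bracket_L_zero (z : sv) (i : SVIndex) :
    A.basis.repr ⁅A.L 0, z⁆ i = i.weight * A.basis.repr z i := by
  have key : A.basis.coord i ∘ₗ LieAlgebra.ad ℂ sv (A.L 0) = i.weight • A.basis.coord i :=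
    A.basis.ext fun j => by
      classical
      simp only [LinearMap.comp_apply, LieAlgebra.ad_apply, lie_L_zero_basis]
      simp [single_apply]
      split_ifs with h <;> simp [h]
  simpa using LinearMap.congr_fun key z

lemma eq_smul_c_add_smul_M_zero_of_central {z : sv} (hz : ∀ x : sv, ⁅x, z⁆ = 0) :
    z = A.basis.repr z .c • A.c + A.basis.repr z (.M 0) • A.M 0 := by
  have hL0 : A.basis.repr z (.L 0) = 0 := by
    have := A.repr_bracket_L 1 (A.L 1) z
    norm_num [hz, wittCoeff_apply] at this
    exact this
  refine A.basis.ext_elem fun i => ?_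
  by_cases hi : i = .L 0 ∨ i = .M 0 ∨ i = .c
  · rcases hi with rfl | rfl | rfl <;> simp [hL0]
  · push Not at hi
    obtain ⟨hL, hM, hc⟩ := hi
    have h := A.repr_bracket_L_zero z i
    rw [hz, map_zero, Finsupp.zero_apply, eq_comm, mul_eq_zero] at h
    simp [h.resolve_left (i.weight_ne_zero hL hM hc), hM.symm, hc.symm]

lemma repr_bracket_c_eq_zero_of_central {x y : sv} (h : ∀ w : sv, ⁅w, ⁅x, y⁆⁆ = 0) :
    A.basis.repr ⁅x, y⁆ .c = 0 := by
  rw [repr_bracket_c]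
  refine virasoroCocycle_eq_zero_of_wittCoeff_eq_zero fun k => ?_
  rw [← repr_bracket_L, A.eq_smul_c_add_smul_M_zero_of_central h]
  simp

lemma M_zero_eq_bracket : A.M 0 = ⁅A.Y (-1), A.Y 0⁆ := by
  rw [A.bracket_YY]
  norm_num

end SVAlgebra

namespace ConjAntiInvolution

variable (θ : ConjAntiInvolution sv)

lemma map_zero : θ.toFun 0 = 0 := by
  simpa using θ.map_smul' 0 0

lemma map_central {z : sv} (hz : ∀ x : sv, ⁅x, z⁆ = 0) (x : sv) : ⁅x, θ.toFun z⁆ = 0 := by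
  rw [← θ.invol' x, ← θ.map_bracket', ← lie_skew, hz, neg_zero, map_zero]

end ConjAntiInvolution

lemma SVAlgebra.map_M_zero_eq_smul (A : SVAlgebra sv) (θ : ConjAntiInvolution sv) :
    θ.toFun (A.M 0) = A.basis.repr (θ.toFun (A.M 0)) (.M 0) • A.M 0 := by
  have hcentral := θ.map_central A.M_zero_central
  have hbracket : θ.toFun (A.M 0) = ⁅θ.toFun (A.Y 0), θ.toFun (A.Y (-1))⁆ := by
    rw [A.M_zero_eq_bracket, θ.map_bracket']
  have hc := A.repr_bracket_c_eq_zero_of_central (hbracket ▸ hcentral)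
  rw [← hbracket] at hc
  conv_lhs => rw [A.eq_smul_c_add_smul_M_zero_of_central hcentral, hc, zero_smul, zero_add]

/-- For any conjugate-linear anti-involution `θ` of `𝔰𝔳` there are `λ, μ` of
modulus one and `λ' ∈ ℂ` with `θ(c) = λ·c + λ'·M₀` and `θ(M₀) = μ·M₀`. -/
theorem sv_antiInvolution_on_center (A : SVAlgebra sv) (θ : ConjAntiInvolution sv) :
    ∃ lam mu lam' : ℂ, ‖lam‖ = 1 ∧ ‖mu‖ = 1 ∧
      θ.toFun A.c = lam • A.c + lam' • A.M 0 ∧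
      θ.toFun (A.M 0) = mu • A.M 0 := by
  have hM := A.map_M_zero_eq_smul θ
  have hc := A.eq_smul_c_add_smul_M_zero_of_central (θ.map_central A.bracket_c)
  set mu := A.basis.repr (θ.toFun (A.M 0)) (.M 0)
  set lam := A.basis.repr (θ.toFun A.c) .c
  refine ⟨lam, mu, _, Complex.norm_eq_one_of_conj_mul_self ?_,
    Complex.norm_eq_one_of_conj_mul_self ?_, hc, hM⟩
  · have h := congrArg (fun x => A.basis.repr x .c) (θ.invol' A.c)
    rw [hc, θ.map_add', θ.map_smul', θ.map_smul', hc, hM] at h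
    simpa [single_apply] using h
  · have h := congrArg (fun x => A.basis.repr x (.M 0)) (θ.invol' (A.M 0))
    rw [hM, θ.map_smul', hM] at h
    simpa [single_apply] using h
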